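/- arXiv:1706.08349 — 3 statements merged into one kernel-verified Lean document; each statement's English description precedes it below -/
import Mathlib

section
/- Let U ∈ ℂ^{n×n} be invertible and ‖·‖_ν a matrix norm on ℂ^{n×m} with ‖U X‖_ν = ‖X‖_ν for all X. Then, for any full-row-rank A ∈ ℂ^{m×n}, the set of ν-norm-minimizing generalized inverses satisfies ginv_ν(A U) = U⁻¹ · ginv_ν(A), where ginv_ν(A) = argmin { ‖X‖_ν : A X = I }. -/
open Matrix

/-- If `‖U X‖_ν = ‖X‖_ν` for an invertible `U`, then
`ginv_ν(A U) = U⁻¹ · ginv_ν(A)`. -/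
theorem stmt_6 {m n : ℕ} (hmn : m < n) (A : Matrix (Fin m) (Fin n) ℂ)
    (hrank : A.rank = m)
    (U : Matrix (Fin n) (Fin n) ℂ) (hU : IsUnit U)
    (N : Matrix (Fin n) (Fin m) ℂ → ℝ)
    (hN : ∀ X : Matrix (Fin n) (Fin m) ℂ, N (U * X) = N X) :
    {X : Matrix (Fin n) (Fin m) ℂ |
        (A * U) * X = 1 ∧ ∀ Y : Matrix (Fin n) (Fin m) ℂ, (A * U) * Y = 1 → N X ≤ N Y} =
      (fun X : Matrix (Fin n) (Fin m) ℂ => U⁻¹ * X) ''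
        {X : Matrix (Fin n) (Fin m) ℂ |
          A * X = 1 ∧ ∀ Y : Matrix (Fin n) (Fin m) ℂ, A * Y = 1 → N X ≤ N Y} := by
  have hdet : IsUnit U.det := (Matrix.isUnit_iff_isUnit_det U).mp hU
  have hUiU : U⁻¹ * U = 1 := Matrix.nonsing_inv_mul U hdet
  have hUUi : U * U⁻¹ = 1 := Matrix.mul_nonsing_inv U hdet
  have hNinv : ∀ Y : Matrix (Fin n) (Fin m) ℂ, N (U⁻¹ * Y) = N Y := by
    intro Y
    conv_rhs => rw [show Y = U * (U⁻¹ * Y) by rw [← Matrix.mul_assoc, hUUi, Matrix.one_mul]]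
    rw [hN]
  ext X
  simp only [Set.mem_setOf_eq, Set.mem_image]
  constructor
  · rintro ⟨h1, h2⟩
    refine ⟨U * X, ⟨by rw [← Matrix.mul_assoc]; exact h1, ?_⟩, by
      rw [← Matrix.mul_assoc, hUiU, Matrix.one_mul]⟩
    intro Y hY
    rw [hN]
    have := h2 (U⁻¹ * Y) (by rw [Matrix.mul_assoc, ← Matrix.mul_assoc U, hUUi, Matrix.one_mul]; exact hY)
    rwa [hNinv] at this
  · rintro ⟨Z, ⟨h1, h2⟩, rfl⟩
    refine ⟨by rw [Matrix.mul_assoc, ← Matrix.mul_assoc U, hUUi, Matrix.one_mul]; exact h1, ?_⟩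
    intro Y hY
    rw [hNinv]
    have := h2 (U * Y) (by rw [← Matrix.mul_assoc]; exact hY)
    rwa [hN] at this
end

section
/- For the matrix A = [[1,1,0],[1,0,1]] ∈ ℝ^{2×3}, there exist generalized inverses X ≠ A† with A X = I₂ and spectral norm ‖X‖_{S_∞} = ‖A†‖_{S_∞} = 1. Hence the minimizer of the spectral norm over 𝒢(A) is not unique. -/
open Matrix

/-- The spectral norm (largest singular value) as the `ℓ²→ℓ²` induced norm. -/
noncomputable def specNorm {a b : ℕ} (M : Matrix (Fin a) (Fin b) ℝ) : ℝ :=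
  sSup {r : ℝ | ∃ x : Fin b → ℝ, x ≠ 0 ∧
    r = Real.sqrt (∑ i, (M.mulVec x i) ^ 2) / Real.sqrt (∑ j, (x j) ^ 2)}

lemma specNorm_eq_one {a b : ℕ} (M : Matrix (Fin a) (Fin b) ℝ)
    (hub : ∀ x : Fin b → ℝ, ∑ i, (M.mulVec x i) ^ 2 ≤ ∑ j, (x j) ^ 2)
    (x0 : Fin b → ℝ) (hx0 : x0 ≠ 0)
    (heq : ∑ i, (M.mulVec x0 i) ^ 2 = ∑ j, (x0 j) ^ 2) :
    specNorm M = 1 := by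
  have hq : ∀ x : Fin b → ℝ, x ≠ 0 → 0 < ∑ j, (x j) ^ 2 := by
    intro x hx
    obtain ⟨j, hj⟩ := Function.ne_iff.mp hx
    exact Finset.sum_pos' (fun i _ => sq_nonneg _)
      ⟨j, Finset.mem_univ j, lt_of_le_of_ne (sq_nonneg _) (Ne.symm (pow_ne_zero 2 hj))⟩
  apply IsGreatest.csSup_eq
  constructor
  · refine ⟨x0, hx0, ?_⟩
    rw [heq]
    exact (div_self (Real.sqrt_pos.mpr (hq x0 hx0)).ne').symm
  · rintro r ⟨x, hx, rfl⟩
    rw [div_le_one (Real.sqrt_pos.mpr (hq x hx))]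
    exact Real.sqrt_le_sqrt (hub x)

/-- For `A = [[1,1,0],[1,0,1]]`, the spectral norm minimizer over `𝒢(A)` is not
unique: there is a generalized inverse `X ≠ A†` with
`‖X‖_{S∞} = ‖A†‖_{S∞} = 1`. -/
theorem stmt_13 :
    let A : Matrix (Fin 2) (Fin 3) ℝ := !![1, 1, 0; 1, 0, 1]
    let Apinv := Aᵀ * (A * Aᵀ)⁻¹
    ∃ X : Matrix (Fin 3) (Fin 2) ℝ,
      A * X = 1 ∧ X ≠ Apinv ∧ specNorm X = 1 ∧ specNorm Apinv = 1 := by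
  intro A Apinv
  have hAT : Aᵀ = !![1, 1; 1, 0; 0, 1] := by
    ext i j
    fin_cases i <;> fin_cases j <;> simp [A]
  have hinv : (A * Aᵀ)⁻¹ = !![2/3, -1/3; -1/3, 2/3] := by
    apply Matrix.inv_eq_right_inv
    rw [hAT]
    ext i j
    fin_cases i <;> fin_cases j <;>
      simp [A, Matrix.mul_apply, Matrix.one_apply, Fin.sum_univ_succ] <;> norm_num
  have hApinv : Apinv = !![1/3, 1/3; 2/3, -1/3; -1/3, 2/3] := by
    show Aᵀ * (A * Aᵀ)⁻¹ = _
    rw [hinv, hAT]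
    ext i j
    fin_cases i <;> fin_cases j <;>
      simp [A, Matrix.mul_apply, Fin.sum_univ_succ] <;> norm_num
  refine ⟨!![2/3, 2/3; 1/3, -2/3; -2/3, 1/3], ?_, ?_, ?_, ?_⟩
  · ext i j
    fin_cases i <;> fin_cases j <;>
      simp [A, Matrix.mul_apply, Matrix.one_apply, Fin.sum_univ_succ] <;> norm_num
  · intro h
    rw [hApinv] at h
    have := congrFun (congrFun h 0) 0
    norm_num at this
  · apply specNorm_eq_one _ ?_ ![1, 0] ?_ ?_
    · intro x
      have h1 : ∀ i : Fin 3,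
          (!![(2:ℝ)/3, 2/3; 1/3, -2/3; -2/3, 1/3]).mulVec x i =
            ![2/3 * x 0 + 2/3 * x 1, 1/3 * x 0 + -2/3 * x 1,
              -2/3 * x 0 + 1/3 * x 1] i := by
        intro i
        fin_cases i <;> simp [Matrix.mulVec, dotProduct, Fin.sum_univ_succ] <;> ring
      simp only [Fin.sum_univ_three, Fin.sum_univ_two, h1]
      simp only [Matrix.cons_val_zero, Matrix.cons_val_one, Matrix.head_cons,
        Matrix.cons_val_two, Matrix.tail_cons, Matrix.cons_val_succ]
      nlinarith [sq_nonneg (x 0), sq_nonneg (x 1)]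
    · intro h
      have := congrFun h 0
      norm_num at this
    · simp [Matrix.mulVec, dotProduct, Fin.sum_univ_succ]
      norm_num
  · rw [hApinv]
    apply specNorm_eq_one _ ?_ ![1, -1] ?_ ?_
    · intro x
      have h1 : ∀ i : Fin 3,
          (!![(1:ℝ)/3, 1/3; 2/3, -1/3; -1/3, 2/3]).mulVec x i =
            ![1/3 * x 0 + 1/3 * x 1, 2/3 * x 0 + -1/3 * x 1,
              -1/3 * x 0 + 2/3 * x 1] i := by
        intro i
        fin_cases i <;> simp [Matrix.mulVec, dotProduct, Fin.sum_univ_succ] <;> ring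
      simp only [Fin.sum_univ_three, Fin.sum_univ_two, h1]
      simp only [Matrix.cons_val_zero, Matrix.cons_val_one, Matrix.head_cons,
        Matrix.cons_val_two, Matrix.tail_cons, Matrix.cons_val_succ]
      nlinarith [sq_nonneg (x 0 + x 1)]
    · intro h
      have := congrFun h 0
      norm_num at this
    · simp [Matrix.mulVec, dotProduct, Fin.sum_univ_succ]
      norm_num
end

section
/- Let A ∈ ℂ^{m×n}, 0 < p ≤ 1, and suppose there is X ∈ 𝒢(A) whose every column is k-sparse, where k is such that every k-sparse vector x is the unique ℓ^p-minimal solution of A z = A x. Then for all 0 < q < ∞, X is the unique minimizer of the columnwise mixed norm ‖·‖_{c(p,q)} over 𝒢(A). -/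
open Matrix

/-- The vector `ℓ^p` quasi-norm for finite `p > 0`. -/
noncomputable def lpNorm (p : ℝ) {ι : Type*} [Fintype ι] (x : ι → ℂ) : ℝ :=
  (∑ i, ‖x i‖ ^ p) ^ (1 / p)

/-- The columnwise mixed norm `‖X‖_{c(p,q)}`. -/
noncomputable def cNorm {m n : ℕ} (p q : ℝ) (X : Matrix (Fin n) (Fin m) ℂ) : ℝ :=
  (∑ j, lpNorm p (fun i => X i j) ^ q) ^ (1 / q)

lemma lpNorm_nonneg (p : ℝ) {ι : Type*} [Fintype ι] (x : ι → ℂ) : 0 ≤ lpNorm p x :=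
  Real.rpow_nonneg (Finset.sum_nonneg fun _ _ => Real.rpow_nonneg (norm_nonneg _) _) _

/-- If `X ∈ 𝒢(A)` has `k`-sparse columns, where every `k`-sparse vector is the
unique `ℓ^p`-minimal solution of its measurement equation, then `X` is the
unique minimizer of `‖·‖_{c(p,q)}` over `𝒢(A)` for every `0 < q < ∞`. -/
theorem stmt_18 {m n : ℕ} (A : Matrix (Fin m) (Fin n) ℂ)
    (p : ℝ) (hp0 : 0 < p) (hp1 : p ≤ 1) (k : ℕ)
    (hk : ∀ x : Fin n → ℂ, Fintype.card {i // x i ≠ 0} ≤ k →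
      ∀ z : Fin n → ℂ, A.mulVec z = A.mulVec x → z ≠ x →
        lpNorm p x < lpNorm p z)
    (X : Matrix (Fin n) (Fin m) ℂ) (hX : A * X = 1)
    (hsparse : ∀ j : Fin m, Fintype.card {i // X i j ≠ 0} ≤ k) :
    ∀ q : ℝ, 0 < q →
      ∀ Y : Matrix (Fin n) (Fin m) ℂ, A * Y = 1 → Y ≠ X →
        cNorm p q X < cNorm p q Y := by
  intro q hq Y hY hne
  have hcol : ∀ j, A.mulVec (fun i => Y i j) = A.mulVec (fun i => X i j) := by
    intro j
    funext i'
    have h1 := congrFun (congrFun hY i') j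
    have h2 := congrFun (congrFun hX i') j
    simpa [Matrix.mul_apply, Matrix.mulVec, dotProduct] using h1.trans h2.symm
  have hle : ∀ j, lpNorm p (fun i => X i j) ≤ lpNorm p (fun i => Y i j) := by
    intro j
    by_cases h : (fun i => Y i j) = (fun i => X i j)
    · rw [h]
    · exact le_of_lt (hk _ (hsparse j) _ (hcol j) h)
  obtain ⟨j0, hj0⟩ : ∃ j, (fun i => Y i j) ≠ (fun i => X i j) := by
    by_contra h
    push_neg at h
    exact hne (by funext i j; exact congrFun (h j) i)
  have hlt : lpNorm p (fun i => X i j0) < lpNorm p (fun i => Y i j0) :=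
    hk _ (hsparse j0) _ (hcol j0) hj0
  have hsum : ∑ j, lpNorm p (fun i => X i j) ^ q < ∑ j, lpNorm p (fun i => Y i j) ^ q := by
    apply Finset.sum_lt_sum (fun j _ => Real.rpow_le_rpow (lpNorm_nonneg p _) (hle j) hq.le)
    exact ⟨j0, Finset.mem_univ _, Real.rpow_lt_rpow (lpNorm_nonneg p _) hlt hq⟩
  unfold cNorm
  exact Real.rpow_lt_rpow
    (Finset.sum_nonneg fun j _ => Real.rpow_nonneg (lpNorm_nonneg p _) _) hsum (by positivity)
end
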